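/- arXiv:2510.27302 — 2 statements merged into one kernel-verified Lean document; each statement's English description precedes it below -/
import Mathlib

section
/- Let X be a real Banach space, let u* ∈ X, let r > 0, and let F : X → X be Fréchet differentiable on the open ball B(u*, r) with F(u*) = 0. Suppose the Fréchet derivative F' is Lipschitz continuous on B(u*, r) with constant L ≥ 0 (i.e., ‖F'(u₁) − F'(u₂)‖ ≤ L‖u₁ − u₂‖ for all u₁, u₂ ∈ B(u*, r)), and suppose M > 0 is such that for every n the derivative F'(uₙ) at the n-th Newton iterate admits a bounded inverse with ‖[F'(uₙ)]⁻¹‖ ≤ M. If the initial point u₀ ∈ B(u*, r) satisfies L·M·‖u₀ − u*‖ < 1 (and the iterates remain in B(u*, r)), then the Newton–Kantorovich iteration u_{n+1} = uₙ − [F'(uₙ)]⁻¹ F(uₙ) satisfies ‖u_{n+1} − u*‖ ≤ (L·M/2)·‖uₙ − u*‖² for all n, and consequently uₙ converges to u*. -/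
/-!
The Newton step is `uₙ₊₁ - u* = A (F u* - F uₙ - F'(uₙ)(u* - uₙ))` with `A = [F'(uₙ)]⁻¹`, so its
error is controlled by `‖A‖` times the first-order Taylor remainder of `F`, which a Lipschitz
derivative bounds by `L/2 ‖u* - uₙ‖²` (compare the remainder along the segment with the
parabola `t ↦ L ‖d‖² t² / 2`). The resulting recursion `eₙ₊₁ ≤ K eₙ²` with `K e₀ < 1` gives
`eₙ ≤ (K e₀)ⁿ e₀`, hence convergence.
-/

open Metric Filter Set

section

variable {E G : Type*} [NormedAddCommGroup E] [NormedSpace ℝ E]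
  [NormedAddCommGroup G] [NormedSpace ℝ G]

theorem norm_image_one_le_of_norm_deriv_le_mul {g g' : ℝ → G} {C : ℝ}
    (hg : ∀ t ∈ Icc (0 : ℝ) 1, HasDerivAt g (g' t) t) (hg0 : g 0 = 0)
    (hbound : ∀ t ∈ Ico (0 : ℝ) 1, ‖g' t‖ ≤ C * t) :
    ‖g 1‖ ≤ C / 2 := by
  have hparabola : ∀ t : ℝ, HasDerivAt (fun t : ℝ => C * t ^ 2 / 2) (C * t) t := fun t =>
    (((hasDerivAt_pow 2 t).const_mul C).div_const 2).congr_deriv (by ring)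
  have := image_norm_le_of_norm_deriv_right_le_deriv_boundary
    (fun t ht => (hg t ht).continuousAt.continuousWithinAt)
    (fun t ht => (hg t (Ico_subset_Icc_self ht)).hasDerivWithinAt)
    (by simp [hg0]) hparabola hbound (right_mem_Icc.2 zero_le_one)
  simpa using this

theorem Convex.norm_image_sub_sub_fderiv_le_of_lipschitz {F : E → G} {F' : E → E →L[ℝ] G}
    {s : Set E} (hs : Convex ℝ s) (hdiff : ∀ x ∈ s, HasFDerivAt F (F' x) x) {L : ℝ}
    (hLip : ∀ x ∈ s, ∀ y ∈ s, ‖F' x - F' y‖ ≤ L * ‖x - y‖) {a b : E} (ha : a ∈ s) (hb : b ∈ s) :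
    ‖F b - F a - F' a (b - a)‖ ≤ L / 2 * ‖b - a‖ ^ 2 := by
  set d := b - a
  have hsegment : ∀ t ∈ Icc (0 : ℝ) 1, a + t • d ∈ s := fun t ht => by
    have : a + t • d = (1 - t) • a + t • b := by simp only [d]; module
    exact this ▸ hs ha hb (by linarith [ht.2]) ht.1 (by ring)
  have hderiv : ∀ t ∈ Icc (0 : ℝ) 1, HasDerivAt (fun t : ℝ => F (a + t • d) - F a - t • F' a d)
      (F' (a + t • d) d - F' a d) t := fun t ht => by
    have hline : HasDerivAt (fun t : ℝ => a + t • d) d t := by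
      simpa using ((hasDerivAt_id t).smul_const d).const_add a
    have hcomp := (hdiff _ (hsegment t ht)).comp_hasDerivAt t hline
    simpa [Pi.sub_def] using (hcomp.sub_const (F a)).sub ((hasDerivAt_id t).smul_const (F' a d))
  have hbound : ∀ t ∈ Ico (0 : ℝ) 1, ‖F' (a + t • d) d - F' a d‖ ≤ L * ‖d‖ ^ 2 * t :=
    fun t ht => calc
      ‖F' (a + t • d) d - F' a d‖ ≤ ‖F' (a + t • d) - F' a‖ * ‖d‖ :=
        (F' (a + t • d) - F' a).le_opNorm d
      _ ≤ L * ‖t • d‖ * ‖d‖ := by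
        gcongr
        simpa using hLip _ (hsegment t (Ico_subset_Icc_self ht)) _ (hsegment 0 (by simp))
      _ = L * ‖d‖ ^ 2 * t := by rw [norm_smul, Real.norm_of_nonneg ht.1]; ring
  have := norm_image_one_le_of_norm_deriv_le_mul hderiv (by simp) hbound
  simpa [d, mul_div_right_comm] using this

theorem norm_newtonStep_sub_le {F : E → G} {F' : E →L[ℝ] G} {A : G →L[ℝ] E}
    {x xstar : E} {C M : ℝ} (hA : A.comp F' = ContinuousLinearMap.id ℝ E) (hAM : ‖A‖ ≤ M)
    (hFstar : F xstar = 0) (hrem : ‖F xstar - F x - F' (xstar - x)‖ ≤ C * ‖xstar - x‖ ^ 2) :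
    ‖x - A (F x) - xstar‖ ≤ M * C * ‖x - xstar‖ ^ 2 := by
  have hleft : A (F' (xstar - x)) = xstar - x := by simpa using congrArg (· (xstar - x)) hA
  have herror : x - A (F x) - xstar = A (F xstar - F x - F' (xstar - x)) := by
    rw [hFstar, map_sub, map_sub, hleft, map_zero]
    abel
  rw [herror, ← norm_sub_rev xstar, mul_assoc]
  exact (A.le_opNorm _).trans (mul_le_mul hAM hrem (norm_nonneg _) ((norm_nonneg A).trans hAM))

end

theorem le_pow_mul_of_le_mul_sq {e : ℕ → ℝ} {K : ℝ} (hK : 0 ≤ K) (he : ∀ n, 0 ≤ e n)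
    (hrec : ∀ n, e (n + 1) ≤ K * e n ^ 2) (h0 : K * e 0 ≤ 1) (n : ℕ) :
    e n ≤ (K * e 0) ^ n * e 0 := by
  induction n with
  | zero => simp
  | succ n ih =>
    have hKe : 0 ≤ K * e 0 := mul_nonneg hK (he 0)
    have hle : e n ≤ e 0 := ih.trans (mul_le_of_le_one_left (he 0) (pow_le_one₀ hKe h0))
    calc e (n + 1) ≤ K * e n * e n := by rw [mul_assoc, ← sq]; exact hrec n
      _ ≤ K * e 0 * ((K * e 0) ^ n * e 0) := by gcongr; exact he n
      _ = (K * e 0) ^ (n + 1) * e 0 := by ring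

theorem tendsto_zero_of_le_mul_sq {e : ℕ → ℝ} {K : ℝ} (he : ∀ n, 0 ≤ e n)
    (hrec : ∀ n, e (n + 1) ≤ K * e n ^ 2) (h0 : K * e 0 < 1) :
    Tendsto e atTop (nhds 0) := by
  set K' := max K 0
  have hrec' : ∀ n, e (n + 1) ≤ K' * e n ^ 2 := fun n =>
    (hrec n).trans (by gcongr; exact le_max_left K 0)
  have h0' : K' * e 0 < 1 := by
    rw [max_mul_of_nonneg _ _ (he 0), zero_mul]
    exact max_lt h0 one_pos
  have hratio := tendsto_pow_atTop_nhds_zero_of_lt_one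
    (mul_nonneg (le_max_right K 0) (he 0)) h0'
  refine squeeze_zero he (le_pow_mul_of_le_mul_sq (le_max_right K 0) he hrec' h0'.le) ?_
  simpa using hratio.mul_const (e 0)

theorem newton_kantorovich_quadratic_convergence_general
    {X : Type*} [NormedAddCommGroup X] [NormedSpace ℝ X]
    (F : X → X) (F' : X → X →L[ℝ] X) (ustar : X) (r : ℝ)
    (hdiff : ∀ x ∈ ball ustar r, HasFDerivAt F (F' x) x)
    (hFstar : F ustar = 0)
    (L : ℝ)
    (hLip : ∀ u₁ ∈ ball ustar r, ∀ u₂ ∈ ball ustar r,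
      ‖F' u₁ - F' u₂‖ ≤ L * ‖u₁ - u₂‖)
    (M : ℝ)
    (u : ℕ → X) (A : ℕ → X →L[ℝ] X)
    (hinvL : ∀ n, (A n).comp (F' (u n)) = ContinuousLinearMap.id ℝ X)
    (hAnorm : ∀ n, ‖A n‖ ≤ M)
    (hball : ∀ n, u n ∈ ball ustar r)
    (h0 : L * M * ‖u 0 - ustar‖ < 1)
    (hiter : ∀ n, u (n + 1) = u n - A n (F (u n))) :
    (∀ n, ‖u (n + 1) - ustar‖ ≤ (L * M / 2) * ‖u n - ustar‖ ^ 2) ∧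
      Tendsto u atTop (nhds ustar) := by
  have hstar : ustar ∈ ball ustar r := mem_ball_self (pos_of_mem_ball (hball 0))
  have hquad : ∀ n, ‖u (n + 1) - ustar‖ ≤ (L * M / 2) * ‖u n - ustar‖ ^ 2 := fun n => by
    have hrem := (convex_ball ustar r).norm_image_sub_sub_fderiv_le_of_lipschitz hdiff hLip
      (hball n) hstar
    have := norm_newtonStep_sub_le (hinvL n) (hAnorm n) hFstar hrem
    rwa [← hiter n, mul_div_assoc', mul_comm M] at this
  refine ⟨hquad, tendsto_iff_norm_sub_tendsto_zero.2 ?_⟩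
  exact tendsto_zero_of_le_mul_sq (fun n => norm_nonneg _) hquad (by linarith)

/-- Quadratic error bound and convergence of the Newton–Kantorovich
iteration in a real Banach space. -/
theorem newton_kantorovich_quadratic_convergence
    {X : Type*} [NormedAddCommGroup X] [NormedSpace ℝ X] [CompleteSpace X]
    (F : X → X) (F' : X → X →L[ℝ] X) (ustar : X) (r : ℝ) (hr : 0 < r)
    (hdiff : ∀ x ∈ ball ustar r, HasFDerivAt F (F' x) x)
    (hFstar : F ustar = 0)
    (L : ℝ) (hL : 0 ≤ L)
    (hLip : ∀ u₁ ∈ ball ustar r, ∀ u₂ ∈ ball ustar r,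
      ‖F' u₁ - F' u₂‖ ≤ L * ‖u₁ - u₂‖)
    (M : ℝ) (hM : 0 < M)
    (u : ℕ → X) (A : ℕ → X →L[ℝ] X)
    (hinvL : ∀ n, (A n).comp (F' (u n)) = ContinuousLinearMap.id ℝ X)
    (hinvR : ∀ n, (F' (u n)).comp (A n) = ContinuousLinearMap.id ℝ X)
    (hAnorm : ∀ n, ‖A n‖ ≤ M)
    (hball : ∀ n, u n ∈ ball ustar r)
    (h0 : L * M * ‖u 0 - ustar‖ < 1)
    (hiter : ∀ n, u (n + 1) = u n - A n (F (u n))) :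
    (∀ n, ‖u (n + 1) - ustar‖ ≤ (L * M / 2) * ‖u n - ustar‖ ^ 2) ∧
      Tendsto u atTop (nhds ustar) :=
  newton_kantorovich_quadratic_convergence_general F F' ustar r hdiff hFstar L hLip M u A hinvL
    hAnorm hball h0 hiter
end

section
/- Let X be a real Banach space, let u* ∈ X with F(u*) = 0, where F : X → X is Fréchet differentiable on the ball B(u*, r) with F' Lipschitz continuous there with constant L > 0, and suppose F'(u*) admits a bounded inverse with ‖[F'(u*)]⁻¹‖ ≤ M. Then u* is the unique zero of F in the ball B(u*, ρ) for any ρ ≤ min(r, 2/(L M)): if û ∈ B(u*, ρ) satisfies F(û) = 0, then û = u*. -/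
/-!
With `v = û - u*`, the Lipschitz bound on `F'` gives the sharp Taylor estimate
`‖F û - F u* - F'(u*) v‖ ≤ L/2 ‖v‖²`, hence `‖F'(u*) v‖ ≤ L/2 ‖v‖²` since both values of `F`
vanish. Applying the inverse, `‖v‖ ≤ (L M / 2) ‖v‖²`, so a nonzero `v` would have
`‖v‖ ≥ 2/(L M)`, outside the ball.
-/

open Metric

section Taylor

open Set

variable {E F : Type*} [NormedAddCommGroup E] [NormedSpace ℝ E]
  [NormedAddCommGroup F] [NormedSpace ℝ F]

theorem norm_image_sub_le_of_norm_deriv_le_mul_segment_01 {f f' : ℝ → F} {C : ℝ}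
    (hf : ∀ t ∈ Icc (0 : ℝ) 1, HasDerivAt f (f' t) t)
    (bound : ∀ t ∈ Ico (0 : ℝ) 1, ‖f' t‖ ≤ C * t) : ‖f 1 - f 0‖ ≤ C / 2 := by
  have hB : ∀ t : ℝ, HasDerivAt (fun s => C / 2 * s ^ 2) (C * t) t := fun t =>
    ((hasDerivAt_pow 2 t).const_mul (C / 2)).congr_deriv (by ring)
  simpa using image_norm_le_of_norm_deriv_right_le_deriv_boundary (f := fun t => f t - f 0)
    (fun t ht => ((hf t ht).sub_const _).continuousAt.continuousWithinAt)
    (fun t ht => ((hf t (Ico_subset_Icc_self ht)).sub_const _).hasDerivWithinAt)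
    (by simp) hB bound (right_mem_Icc.2 zero_le_one)

theorem Convex.norm_image_sub_sub_fderiv_le {f : E → F} {f' : E → E →L[ℝ] F} {s : Set E}
    {a b : E} {L : ℝ} (hs : Convex ℝ s) (hf : ∀ x ∈ s, HasFDerivAt f (f' x) x)
    (hlip : ∀ x ∈ s, ‖f' x - f' a‖ ≤ L * ‖x - a‖) (ha : a ∈ s) (hb : b ∈ s) :
    ‖f b - f a - f' a (b - a)‖ ≤ L / 2 * ‖b - a‖ ^ 2 := by
  set v := b - a
  have hseg : ∀ t ∈ Icc (0 : ℝ) 1, a + t • v ∈ s := fun t ht => hs.add_smul_sub_mem ha hb ht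
  have hderiv : ∀ t ∈ Icc (0 : ℝ) 1, HasDerivAt (fun t : ℝ => f (a + t • v) - t • f' a v)
      (f' (a + t • v) v - f' a v) t := fun t ht => by
    have hline : HasDerivAt (fun t : ℝ => a + t • v) v t := by
      simpa using ((hasDerivAt_id' t).smul_const v).const_add a
    exact ((hf _ (hseg t ht)).comp_hasDerivAt t hline).sub
      (by simpa using (hasDerivAt_id' t).smul_const (f' a v))
  have hbound : ∀ t ∈ Ico (0 : ℝ) 1, ‖f' (a + t • v) v - f' a v‖ ≤ L * ‖v‖ ^ 2 * t :=
    fun t ht => calc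
      ‖f' (a + t • v) v - f' a v‖ ≤ ‖f' (a + t • v) - f' a‖ * ‖v‖ :=
        (f' (a + t • v) - f' a).le_opNorm v
      _ ≤ L * ‖a + t • v - a‖ * ‖v‖ := by
        gcongr
        exact hlip _ (hseg t (Ico_subset_Icc_self ht))
      _ = L * ‖v‖ ^ 2 * t := by
        rw [add_sub_cancel_left, norm_smul, Real.norm_of_nonneg ht.1]
        ring
  have hquad := norm_image_sub_le_of_norm_deriv_le_mul_segment_01 hderiv hbound
  simp only [one_smul, zero_smul, add_zero, sub_zero, v, add_sub_cancel] at hquad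
  rw [sub_right_comm]
  linarith

end Taylor

theorem eq_zero_of_le_mul_sq_of_lt_inv {x c : ℝ} (hx : 0 ≤ x) (hle : x ≤ c * x ^ 2)
    (hlt : x < c⁻¹) : x = 0 := by
  by_contra hne
  have hpos : 0 < x := lt_of_le_of_ne hx (Ne.symm hne)
  have hcx : 1 ≤ c * x := by nlinarith
  have hc : 0 < c := by nlinarith
  have : c * x < 1 := by simpa [mul_inv_cancel₀ hc.ne'] using mul_lt_mul_of_pos_left hlt hc
  linarith

theorem newton_kantorovich_local_uniqueness_general
    {X : Type*} [NormedAddCommGroup X] [NormedSpace ℝ X]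
    (F : X → X) (F' : X → X →L[ℝ] X) (ustar : X) (r : ℝ)
    (hdiff : ∀ x ∈ ball ustar r, HasFDerivAt F (F' x) x)
    (hFstar : F ustar = 0)
    (L : ℝ)
    (hLip : ∀ u₁ ∈ ball ustar r, ∀ u₂ ∈ ball ustar r,
      ‖F' u₁ - F' u₂‖ ≤ L * ‖u₁ - u₂‖)
    (A : X →L[ℝ] X)
    (hinvL : A.comp (F' ustar) = ContinuousLinearMap.id ℝ X)
    (M : ℝ) (hAnorm : ‖A‖ ≤ M)
    (ρ : ℝ) (hρ : ρ ≤ min r (2 / (L * M)))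
    (uhat : X) (huhat : uhat ∈ ball ustar ρ) (hFhat : F uhat = 0) :
    uhat = ustar := by
  set v := uhat - ustar
  have hρr : ball ustar ρ ⊆ ball ustar r := ball_subset_ball (hρ.trans (min_le_left _ _))
  have hustar : ustar ∈ ball ustar r := hρr (mem_ball_self (nonempty_ball.1 ⟨_, huhat⟩))
  have htaylor : ‖F' ustar v‖ ≤ L / 2 * ‖v‖ ^ 2 := by
    simpa [v, hFhat, hFstar, norm_sub_rev] using
      (convex_ball ustar r).norm_image_sub_sub_fderiv_le hdiff
        (fun x hx => hLip x hx ustar hustar) hustar (hρr huhat)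
  have hv : ‖v‖ ≤ L * M / 2 * ‖v‖ ^ 2 := calc
    ‖v‖ = ‖A (F' ustar v)‖ := by rw [← ContinuousLinearMap.comp_apply, hinvL]; rfl
    _ ≤ M * (L / 2 * ‖v‖ ^ 2) :=
      (A.le_opNorm _).trans
        (mul_le_mul hAnorm htaylor (norm_nonneg _) ((norm_nonneg A).trans hAnorm))
    _ = L * M / 2 * ‖v‖ ^ 2 := by ring
  have hvlt : ‖v‖ < (L * M / 2)⁻¹ := by
    rw [inv_div]
    exact (mem_ball_iff_norm.1 huhat).trans_le (hρ.trans (min_le_right _ _))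
  exact sub_eq_zero.1 (norm_eq_zero.1 (eq_zero_of_le_mul_sq_of_lt_inv (norm_nonneg v) hv hvlt))

/-- Local uniqueness of the zero `u*` of `F` in the ball of radius
`ρ ≤ min(r, 2/(L M))`. -/
theorem newton_kantorovich_local_uniqueness
    {X : Type*} [NormedAddCommGroup X] [NormedSpace ℝ X] [CompleteSpace X]
    (F : X → X) (F' : X → X →L[ℝ] X) (ustar : X) (r : ℝ) (hr : 0 < r)
    (hdiff : ∀ x ∈ ball ustar r, HasFDerivAt F (F' x) x)
    (hFstar : F ustar = 0)
    (L : ℝ) (hL : 0 < L)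
    (hLip : ∀ u₁ ∈ ball ustar r, ∀ u₂ ∈ ball ustar r,
      ‖F' u₁ - F' u₂‖ ≤ L * ‖u₁ - u₂‖)
    (A : X →L[ℝ] X)
    (hinvL : A.comp (F' ustar) = ContinuousLinearMap.id ℝ X)
    (hinvR : (F' ustar).comp A = ContinuousLinearMap.id ℝ X)
    (M : ℝ) (hAnorm : ‖A‖ ≤ M)
    (ρ : ℝ) (hρ : ρ ≤ min r (2 / (L * M)))
    (uhat : X) (huhat : uhat ∈ ball ustar ρ) (hFhat : F uhat = 0) :
    uhat = ustar :=
  newton_kantorovich_local_uniqueness_general F F' ustar r hdiff hFstar L hLip A hinvL M hAnorm ρ hρ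
    uhat huhat hFhat
end
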